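/- arXiv:2006.15730 — 2 statements merged into one kernel-verified Lean document; each statement's English description precedes it below -/
import Mathlib

section
/- Let G be a critical bipartite graph with parts X and Y, let x_0 ∈ X, and let C be a cycle in G with V(C) ∩ X = X − {x_0}. Then x_0 has at least two neighbors on C. -/
open SimpleGraph Set

/-- `(X, Y)` is a bipartition of the graph `G`. -/
def IsBipartition {V : Type*} (G : SimpleGraph V) (X Y : Set V) : Prop :=
  X ∪ Y = Set.univ ∧ Disjoint X Y ∧
    ∀ ⦃u v⦄, G.Adj u v → (u ∈ X ∧ v ∈ Y) ∨ (u ∈ Y ∧ v ∈ X)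

/-- The super-neighborhood `N̂(A)`: vertices of `Y` with at least two neighbors in `A`. -/
def superNbhd {V : Type*} (G : SimpleGraph V) (Y A : Set V) : Set V :=
  {y ∈ Y | 2 ≤ (A ∩ G.neighborSet y).ncard}

/-- The subgraph of `G` induced on the vertex set `S` is 2-connected. -/
def TwoConnectedOn {V : Type*} (G : SimpleGraph V) (S : Set V) : Prop :=
  3 ≤ S.ncard ∧ ∀ v ∈ S, (G.induce (S \ {v})).Connected

/-- Condition (*) for the `(X,Y)`-bigraph `G`. -/
def StarCond {V : Type*} (G : SimpleGraph V) (X Y : Set V) : Prop :=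
  ∀ A ⊆ X, 3 ≤ A.ncard →
    A.ncard ≤ (superNbhd G Y A).ncard ∧ TwoConnectedOn G (A ∪ superNbhd G Y A)

/-- `G` has a cycle with all vertices inside `S` whose set of vertices in `X` is exactly `A`. -/
def CycleOnWithin {V : Type*} (G : SimpleGraph V) (X A S : Set V) : Prop :=
  ∃ (v : V) (c : G.Walk v v), c.IsCycle ∧ {u | u ∈ c.support} ⊆ S ∧
    {u | u ∈ c.support} ∩ X = A

/-- The subgraph of `G` induced on `S` is super-cyclic with respect to the part `X`. -/
def SuperCyclicWithin {V : Type*} (G : SimpleGraph V) (X S : Set V) : Prop :=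
  ∀ A ⊆ X, 3 ≤ A.ncard → CycleOnWithin G X A S

/-- `G` is super-cyclic with respect to the part `X`. -/
def SuperCyclic {V : Type*} (G : SimpleGraph V) (X : Set V) : Prop :=
  SuperCyclicWithin G X Set.univ

/-- The `(X,Y)`-bigraph `G` is critical. -/
def Critical {V : Type*} (G : SimpleGraph V) (X Y : Set V) : Prop :=
  StarCond G X Y ∧ ¬ SuperCyclic G X ∧ superNbhd G Y X = Y ∧
    ∀ X' ⊂ X, SuperCyclicWithin G X' (X' ∪ Y)

/-- The critical `(X,Y)`-bigraph `G` is saturated: adding any `X,Y`-edge makes it super-cyclic. -/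
def Saturated {V : Type*} (G : SimpleGraph V) (X Y : Set V) : Prop :=
  ∀ x ∈ X, ∀ y ∈ Y, ¬ G.Adj x y →
    SuperCyclic (G ⊔ SimpleGraph.fromEdgeSet {s(x, y)}) X

/-- `G` is `Y`-minimal: every proper subgraph `(X', Y'; E')` satisfying (*) is super-cyclic. -/
def YMinimal {V : Type*} (G : SimpleGraph V) (X Y : Set V) : Prop :=
  ∀ (H : SimpleGraph V) (X' Y' : Set V), H ≤ G → X' ⊆ X → Y' ⊆ Y →
    (∀ ⦃u v⦄, H.Adj u v → (u ∈ X' ∧ v ∈ Y') ∨ (u ∈ Y' ∧ v ∈ X')) →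
    ¬ (H = G ∧ X' = X ∧ Y' = Y) →
    StarCond H X' Y' → SuperCyclic H X'

/-!
For every `y ∈ Y` on `C`, `x₀` has a neighbour on `C` other than `y`; applied twice, this gives
two neighbours. Otherwise `C - y` is a path `P` from `a` to `b` through all of `X - {x₀}` that
avoids `N(x₀)`. Condition (*) for `A = {x₀, a, b}` makes `G[A ∪ N̂(A)]` 2-connected, which yields
distinct `g, g' ∈ N(x₀)` with `g ~ a` and `g' ~ b`, so `x₀ g P g' x₀` is a cycle meeting `X` in
all of `X`. In a critical graph this is impossible: every proper subset of `X` lies in some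
`X' ⊊ X`, so the only subset of `X` that no cycle meets exactly is `X` itself.
-/

namespace SimpleGraph

variable {V : Type*} {G : SimpleGraph V}

theorem exists_adj_of_preconnected_induce {D T : Set V} (hD : (G.induce D).Preconnected)
    {u w : V} (hu : u ∈ D) (hw : w ∈ D) (huT : u ∈ T) (hwT : w ∉ T) :
    ∃ a ∈ D, ∃ b ∈ D, a ∈ T ∧ b ∉ T ∧ G.Adj a b := by
  obtain ⟨p⟩ := hD ⟨u, hu⟩ ⟨w, hw⟩
  obtain ⟨d, -, hdT, hdT'⟩ := p.exists_boundary_dart (Subtype.val ⁻¹' T) huT hwT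
  exact ⟨d.fst, d.fst.2, d.snd, d.snd.2, hdT, hdT', d.adj⟩

namespace Walk

theorem IsPath.isCycle_detour {x g g' a b : V} {q : G.Walk a b} (hq : q.IsPath)
    (hxg : G.Adj x g) (hga : G.Adj g a) (hbg' : G.Adj b g') (hg'x : G.Adj g' x) (hgg' : g ≠ g')
    (hx : x ∉ q.support) (hg : g ∉ q.support) (hg' : g' ∉ q.support) :
    (cons hxg (cons hga ((q.concat hbg').concat hg'x))).IsCycle := by
  rw [isCycle_iff_isPath_tail_and_le_length]
  refine ⟨?_, by simp⟩
  simp only [tail_cons]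
  refine ((hq.concat hg' hbg').concat ?_ hg'x).cons ?_
  · simp [hx, hg'x.ne']
  · simp [hg, hgg', hxg.ne']

theorem IsCycle.exists_adj_isPath_adj {y : V} {c : G.Walk y y} (hc : c.IsCycle) :
    ∃ (a b : V) (q : G.Walk a b), q.IsPath ∧ a ≠ b ∧ G.Adj y a ∧ G.Adj b y ∧
      y ∉ q.support ∧ ∀ u, u ∈ c.support ↔ u = y ∨ u ∈ q.support := by
  cases c with
  | nil => exact (not_isCycle_nil hc).elim
  | cons hya p =>
    have hp : ¬ p.Nil := not_nil_of_isCycle_cons hc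
    have hsupp := support_dropLast_concat hp
    have hpath := ((cons_isCycle_iff p hya).mp hc).1
    have hnodup := hpath.support_nodup
    refine ⟨_, _, p.dropLast, hpath.dropLast, ?_, hya, adj_penultimate hp, ?_, fun u ↦ ?_⟩
    · simpa [penultimate_cons_of_not_nil _ _ hp] using hc.snd_ne_penultimate
    · rw [← hsupp, List.nodup_append] at hnodup
      exact fun h ↦ hnodup.2.2 _ h _ (List.mem_singleton_self y) rfl
    · rw [support_cons, ← hsupp]
      simp [or_comm]

theorem IsCycle.exists_adj_isPath_adj_of_mem [DecidableEq V] {v y : V} {c : G.Walk v v}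
    (hc : c.IsCycle) (hy : y ∈ c.support) :
    ∃ (a b : V) (q : G.Walk a b), q.IsPath ∧ a ≠ b ∧ G.Adj y a ∧ G.Adj b y ∧
      y ∉ q.support ∧ ∀ u, u ∈ c.support ↔ u = y ∨ u ∈ q.support := by
  obtain ⟨a, b, q, hq, hab, hya, hby, hyq, hmem⟩ := (hc.rotate hy).exists_adj_isPath_adj
  exact ⟨a, b, q, hq, hab, hya, hby, hyq,
    fun u ↦ (c.mem_support_rotate_iff y hy).symm.trans (hmem u)⟩

end Walk

end SimpleGraph

namespace IsBipartition

variable {V : Type*} {G : SimpleGraph V} {X Y : Set V}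

theorem mem_right_of_adj (hB : IsBipartition G X Y) {u w : V} (h : G.Adj u w) (hu : u ∈ X) :
    w ∈ Y := by
  rcases hB.2.2 h with ⟨-, hw⟩ | ⟨hu', -⟩
  · exact hw
  · exact absurd hu' (Set.disjoint_left.mp hB.2.1 hu)

theorem mem_left_of_adj (hB : IsBipartition G X Y) {u w : V} (h : G.Adj u w) (hu : u ∈ Y) :
    w ∈ X := by
  rcases hB.2.2 h with ⟨hu', -⟩ | ⟨-, hw⟩
  · exact absurd hu (Set.disjoint_left.mp hB.2.1 hu')
  · exact hw

theorem exists_mem_support_mem_right (hB : IsBipartition G X Y) {u w : V} {p : G.Walk u w}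
    (hp : ¬ p.Nil) : ∃ y ∈ p.support, y ∈ Y := by
  cases p with
  | nil => exact absurd Walk.Nil.nil hp
  | cons h q =>
    rcases hB.2.2 h with ⟨-, hy⟩ | ⟨hy, -⟩
    · exact ⟨_, by simp, hy⟩
    · exact ⟨_, by simp, hy⟩

theorem exists_adj_adj_of_preconnected_induce (hB : IsBipartition G X Y) {D : Set V}
    (hD : (G.induce D).Preconnected) {x t : V} (hx : x ∈ X) (ht : t ∈ X) (hxD : x ∈ D)
    (htD : t ∈ D) (hxt : x ≠ t) (hDX : ∀ u ∈ D, u ∈ X → u = x ∨ u = t) :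
    ∃ g, G.Adj x g ∧ G.Adj g t := by
  have htT : t ∉ insert x (G.neighborSet x) := by
    rintro (rfl | hxt')
    · exact hxt rfl
    · exact Set.disjoint_left.mp hB.2.1 ht (hB.mem_right_of_adj hxt' hx)
  obtain ⟨g, -, u, huD, hgT, huT, hgu⟩ :=
    exists_adj_of_preconnected_induce hD hxD htD (Set.mem_insert x _) htT
  rcases hgT with rfl | hxg
  · exact absurd (Set.mem_insert_of_mem _ hgu) huT
  obtain rfl | rfl := hDX u huD (hB.mem_left_of_adj hgu (hB.mem_right_of_adj hxg hx))
  · exact absurd (Set.mem_insert _ _) huT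
  · exact ⟨g, hxg, hgu⟩

end IsBipartition

section StarCond

variable {V : Type*} {G : SimpleGraph V} {X Y : Set V}

theorem StarCond.preconnected_induce_sdiff (hS : StarCond G X Y) {x a b : V} (hx : x ∈ X)
    (ha : a ∈ X) (hb : b ∈ X) (hxa : x ≠ a) (hxb : x ≠ b) (hab : a ≠ b) {z : V}
    (hz : z ∈ ({x, a, b} : Set V) ∪ superNbhd G Y {x, a, b}) :
    (G.induce ((({x, a, b} : Set V) ∪ superNbhd G Y {x, a, b}) \ {z})).Preconnected := by
  have hAX : ({x, a, b} : Set V) ⊆ X := by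
    rintro u (rfl | rfl | rfl) <;> assumption
  exact ((hS _ hAX (Set.ncard_eq_three.mpr ⟨x, a, b, hxa, hxb, hab, rfl⟩).ge).2.2 z hz).preconnected

-- With `A = {x, a, b}`, the only `X`-vertices of `G[A ∪ N̂(A)] - b` are `x` and `a`.
theorem StarCond.exists_adj_adj (hB : IsBipartition G X Y) (hS : StarCond G X Y) {x a b : V}
    (hx : x ∈ X) (ha : a ∈ X) (hb : b ∈ X) (hxa : x ≠ a) (hxb : x ≠ b) (hab : a ≠ b) :
    ∃ g, G.Adj x g ∧ G.Adj g a := by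
  refine hB.exists_adj_adj_of_preconnected_induce
    (hS.preconnected_induce_sdiff hx ha hb hxa hxb hab (Or.inl (by simp))) hx ha
    ⟨Or.inl (by simp), hxb⟩ ⟨Or.inl (by simp), hab⟩ hxa fun u ⟨hu, hub⟩ huX ↦ ?_
  rcases hu with (rfl | rfl | rfl) | hN
  · exact Or.inl rfl
  · exact Or.inr rfl
  · exact absurd rfl hub
  · exact absurd hN.1 (Set.disjoint_left.mp hB.2.1 huX)

theorem StarCond.exists_adj_ne (hB : IsBipartition G X Y) (hS : StarCond G X Y) {x a b g : V}
    (hx : x ∈ X) (ha : a ∈ X) (hb : b ∈ X) (hxa : x ≠ a) (hxb : x ≠ b) (hab : a ≠ b)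
    (hxg : G.Adj x g) (hga : G.Adj g a) (hgb : G.Adj g b) :
    ∃ w ≠ g, G.Adj x w ∧ (G.Adj w a ∨ G.Adj w b) := by
  have hgN : g ∈ superNbhd G Y {x, a, b} := ⟨hB.mem_right_of_adj hxg hx,
    (Set.one_lt_ncard_iff).mpr ⟨a, b, ⟨by simp, hga⟩, ⟨by simp, hgb⟩, hab⟩⟩
  obtain ⟨u, -, w, ⟨hwS, hwg⟩, hux : u = x, hwx, hxw⟩ :=
    exists_adj_of_preconnected_induce (T := {x})
      (hS.preconnected_induce_sdiff hx ha hb hxa hxb hab (Or.inr hgN))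
      ⟨Or.inl (by simp), hxg.ne⟩ ⟨Or.inl (by simp), hga.ne'⟩ rfl hxa.symm
  subst u
  have hwN : w ∈ superNbhd G Y {x, a, b} := hwS.resolve_left fun hwA ↦
    Set.disjoint_left.mp hB.2.1 (by rcases hwA with rfl | rfl | rfl <;> assumption)
      (hB.mem_right_of_adj hxw hx)
  obtain ⟨z, ⟨hzA, hwz⟩, hzx⟩ := Set.exists_ne_of_one_lt_ncard hwN.2 x
  refine ⟨w, hwg, hxw, ?_⟩
  rcases hzA with rfl | rfl | rfl
  · exact absurd rfl hzx
  · exact Or.inl hwz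
  · exact Or.inr hwz

theorem StarCond.exists_ne_adj_adj (hB : IsBipartition G X Y) (hS : StarCond G X Y) {x a b : V}
    (hx : x ∈ X) (ha : a ∈ X) (hb : b ∈ X) (hxa : x ≠ a) (hxb : x ≠ b) (hab : a ≠ b) :
    ∃ g g', g ≠ g' ∧ G.Adj x g ∧ G.Adj g a ∧ G.Adj x g' ∧ G.Adj g' b := by
  obtain ⟨g, hxg, hga⟩ := hS.exists_adj_adj hB hx ha hb hxa hxb hab
  obtain ⟨g', hxg', hg'b⟩ := hS.exists_adj_adj hB hx hb ha hxb hxa hab.symm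
  by_cases hgg' : g = g'
  · subst hgg'
    obtain ⟨w, hwg, hxw, hwa | hwb⟩ := hS.exists_adj_ne hB hx ha hb hxa hxb hab hxg hga hg'b
    · exact ⟨w, g, hwg, hxw, hwa, hxg, hg'b⟩
    · exact ⟨g, w, hwg.symm, hxg, hga, hxw, hwb⟩
  · exact ⟨g, g', hgg', hxg, hga, hxg', hg'b⟩

end StarCond

theorem CycleOnWithin.of_inter_eq {V : Type*} {G : SimpleGraph V} {X X' A S S' : Set V}
    (h : CycleOnWithin G X' A S) (hSS' : S ⊆ S') (hX : S ∩ X = S ∩ X') :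
    CycleOnWithin G X A S' := by
  obtain ⟨v, c, hc, hcS, hcA⟩ := h
  refine ⟨v, c, hc, hcS.trans hSS', ?_⟩
  rw [← hcA, ← Set.inter_eq_left.mpr hcS, Set.inter_assoc, Set.inter_assoc, hX]

theorem Critical.not_cycleOnWithin_self {V : Type*} {G : SimpleGraph V} {X Y : Set V}
    (hXY : Disjoint X Y) (h : Critical G X Y) : ¬ CycleOnWithin G X X Set.univ := by
  intro hX
  obtain ⟨A, hAX, hA3, hA⟩ : ∃ A ⊆ X, 3 ≤ A.ncard ∧ ¬ CycleOnWithin G X A Set.univ := by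
    simpa [SuperCyclic, SuperCyclicWithin] using h.2.1
  obtain rfl | ⟨x, hxX, hxA⟩ := hAX.eq_or_ssubset.imp id Set.exists_of_ssubset
  · exact hA hX
  refine hA ((h.2.2.2 (X \ {x}) (Set.sdiff_singleton_ssubset.mpr hxX) A
    (Set.subset_sdiff_singleton hAX hxA) hA3).of_inter_eq (Set.subset_univ _) ?_)
  ext u
  have := @Set.disjoint_left.mp hXY u
  simp only [Set.mem_inter_iff, Set.mem_union, Set.mem_sdiff, Set.mem_singleton_iff]
  tauto

theorem Critical.exists_adj_ne_of_mem_support {V : Type*} [DecidableEq V] {G : SimpleGraph V}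
    {X Y : Set V} (hB : IsBipartition G X Y) (hcrit : Critical G X Y) {x₀ : V} (hx₀ : x₀ ∈ X)
    {v : V} {c : G.Walk v v} (hc : c.IsCycle) (hbase : {u | u ∈ c.support} ∩ X = X \ {x₀})
    {y : V} (hyc : y ∈ c.support) (hyY : y ∈ Y) :
    ∃ g ∈ c.support, G.Adj x₀ g ∧ g ≠ y := by
  by_contra! hy
  obtain ⟨a, b, q, hq, hab, hya, hby, hyq, hcq⟩ := hc.exists_adj_isPath_adj_of_mem hyc
  have hcX : ∀ u ∈ X, u ∈ c.support ↔ u ≠ x₀ := fun u hu ↦ by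
    simpa [hu] using congrArg (u ∈ ·) hbase
  have hqc : ∀ u ∈ q.support, u ∈ c.support := fun u hu ↦ (hcq u).mpr (Or.inr hu)
  have hqX : ∀ u ∈ X, u ≠ x₀ → u ∈ q.support := fun u hu hux₀ ↦
    ((hcq u).mp ((hcX u hu).mpr hux₀)).resolve_left
      (by rintro rfl; exact Set.disjoint_left.mp hB.2.1 hu hyY)
  have ha := hB.mem_left_of_adj hya hyY
  have hb := hB.mem_left_of_adj hby.symm hyY
  have hx₀q : x₀ ∉ q.support := fun h ↦ (hcX x₀ hx₀).mp (hqc x₀ h) rfl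
  have hnq : ∀ g, G.Adj x₀ g → g ∉ q.support := fun g hg hgq ↦ hyq (hy g (hqc g hgq) hg ▸ hgq)
  obtain ⟨g, g', hgg', hx₀g, hga, hx₀g', hg'b⟩ := hcrit.1.exists_ne_adj_adj hB hx₀ ha hb
    (by rintro rfl; exact hx₀q q.start_mem_support) (by rintro rfl; exact hx₀q q.end_mem_support)
    hab
  refine hcrit.not_cycleOnWithin_self hB.2.1 ⟨x₀, _, hq.isCycle_detour hx₀g hga hg'b.symm
    hx₀g'.symm hgg' hx₀q (hnq g hx₀g) (hnq g' hx₀g'), Set.subset_univ _, ?_⟩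
  ext u
  refine ⟨And.right, fun hu ↦ ⟨?_, hu⟩⟩
  by_cases hux₀ : u = x₀
  · simp [hux₀]
  · simp [hqX u hu hux₀]

theorem stmt_14_general {V : Type*} (G : SimpleGraph V) (X Y : Set V)
    (hbip : IsBipartition G X Y) (hcrit : Critical G X Y)
    (x₀ : V) (hx₀ : x₀ ∈ X)
    (v : V) (c : G.Walk v v) (hc : c.IsCycle)
    (hbase : {u | u ∈ c.support} ∩ X = X \ {x₀}) :
    2 ≤ {w | w ∈ c.support ∧ G.Adj x₀ w}.ncard := by
  classical
  obtain ⟨y, hyc, hyY⟩ := hbip.exists_mem_support_mem_right hc.not_nil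
  obtain ⟨g, hgc, hx₀g, -⟩ := hcrit.exists_adj_ne_of_mem_support hbip hx₀ hc hbase hyc hyY
  obtain ⟨g', hg'c, hx₀g', hg'g⟩ := hcrit.exists_adj_ne_of_mem_support hbip hx₀ hc hbase hgc
    (hbip.mem_right_of_adj hx₀g hx₀)
  exact (Set.one_lt_ncard_iff ((List.finite_toSet c.support).subset fun _ h ↦ h.1)).mpr
    ⟨g', g, ⟨hg'c, hx₀g'⟩, ⟨hgc, hx₀g⟩, hg'g⟩

theorem stmt_14 {V : Type*} [Fintype V] (G : SimpleGraph V) (X Y : Set V)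
    (hbip : IsBipartition G X Y) (hcrit : Critical G X Y)
    (x₀ : V) (hx₀ : x₀ ∈ X)
    (v : V) (c : G.Walk v v) (hc : c.IsCycle)
    (hbase : {u | u ∈ c.support} ∩ X = X \ {x₀}) :
    2 ≤ {w | w ∈ c.support ∧ G.Adj x₀ w}.ncard :=
  stmt_14_general G X Y hbip hcrit x₀ hx₀ v c hc hbase
end

section
/- Let G be a bipartite graph with parts X and Y satisfying condition (*), with |X| ≥ 4. If for some A ⊆ X with |A| ≥ 4 the induced subgraph G[A ∪ N̂(A)] is not 2-connected, then there exists A' ⊆ A with |A'| = 3 such that G[A' ∪ N̂(A')] is not 2-connected. -/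
open SimpleGraph Set

/-!
Fix a vertex `v` to delete. Any two vertices of `A \ {v}` lie in a triple `A' ⊆ A \ {v}` (this needs
`|A| ≥ 4`), and since `N̂(A') ⊆ N̂(A)`, the 2-connectivity of `G[A' ∪ N̂(A')]` joins them in
`G[A ∪ N̂(A)] - v`. Every vertex of `N̂(A)` has two neighbours in `A`, hence one other than `v`.
-/

section

variable {V : Type*} (G : SimpleGraph V) (Y : Set V)

lemma superNbhd_mono [Finite V] {A B : Set V} (h : A ⊆ B) :
    superNbhd G Y A ⊆ superNbhd G Y B :=
  fun _ hy => ⟨hy.1, hy.2.trans (ncard_le_ncard (inter_subset_inter_left _ h))⟩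

lemma exists_adj_ne_of_mem_superNbhd {A : Set V} {y : V} (hy : y ∈ superNbhd G Y A) (v : V) :
    ∃ a ∈ A, a ≠ v ∧ G.Adj y a := by
  obtain ⟨a, ⟨haA, hya⟩, hav⟩ := exists_ne_of_one_lt_ncard hy.2 v
  exact ⟨a, haA, hav, hya⟩

variable {G} in
/-- If `v ∉ S`, delete instead any vertex of `S` other than `a` and `b`. -/
lemma TwoConnectedOn.reachable_induce_diff_singleton {S : Set V} (hS : TwoConnectedOn G S)
    {v a b : V} (ha : a ∈ S \ {v}) (hb : b ∈ S \ {v}) :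
    (G.induce (S \ {v})).Reachable ⟨a, ha⟩ ⟨b, hb⟩ := by
  by_cases hv : v ∈ S
  · exact (hS.2 v hv).preconnected _ _
  have hab : ({a, b} : Set V).ncard < S.ncard :=
    (ncard_insert_le a {b}).trans_lt (by rw [ncard_singleton]; linarith [hS.1])
  obtain ⟨w, hwS, hw⟩ := exists_mem_notMem_of_ncard_lt_ncard hab
  have hwa : a ∈ S \ {w} := ⟨ha.1, fun h => hw (Or.inl h.symm)⟩
  have hwb : b ∈ S \ {w} := ⟨hb.1, fun h => hw (Or.inr h.symm)⟩
  have hsub : S \ {w} ⊆ S \ {v} := fun x hx => ⟨hx.1, fun h => hv (h ▸ hx.1)⟩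
  exact ((hS.2 w hwS).preconnected ⟨a, hwa⟩ ⟨b, hwb⟩).map (G.induceHomOfLE hsub).toHom

lemma reachable_induce_union_superNbhd_diff_singleton [Finite V] {A : Set V}
    (hA : 4 ≤ A.ncard)
    (h : ∀ A' ⊆ A, A'.ncard = 3 → TwoConnectedOn G (A' ∪ superNbhd G Y A'))
    {v a b : V} (haA : a ∈ A) (hbA : b ∈ A)
    (ha : a ∈ (A ∪ superNbhd G Y A) \ {v}) (hb : b ∈ (A ∪ superNbhd G Y A) \ {v}) :
    (G.induce ((A ∪ superNbhd G Y A) \ {v})).Reachable ⟨a, ha⟩ ⟨b, hb⟩ := by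
  have hab : ({a, b} : Set V) ⊆ A \ {v} := by
    rintro x (rfl | rfl)
    exacts [⟨haA, ha.2⟩, ⟨hbA, hb.2⟩]
  obtain ⟨A', habA', hA'A, hA'3⟩ := exists_subsuperset_card_eq (n := 3) hab
    ((ncard_insert_le a {b}).trans (by rw [ncard_singleton]; omega))
    (by have := pred_ncard_le_ncard_sdiff_singleton A v; omega)
  have hA'A : A' ⊆ A := hA'A.trans sdiff_subset
  have hsub : (A' ∪ superNbhd G Y A') \ {v} ⊆ (A ∪ superNbhd G Y A) \ {v} :=
    sdiff_subset_sdiff_left (union_subset_union hA'A (superNbhd_mono G Y hA'A))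
  have ha' : a ∈ (A' ∪ superNbhd G Y A') \ {v} := ⟨Or.inl (habA' (by simp)), ha.2⟩
  have hb' : b ∈ (A' ∪ superNbhd G Y A') \ {v} := ⟨Or.inl (habA' (by simp)), hb.2⟩
  exact ((h A' hA'A hA'3).reachable_induce_diff_singleton ha' hb').map
    (G.induceHomOfLE hsub).toHom

theorem twoConnectedOn_union_superNbhd_of_forall_triple [Finite V] {A : Set V}
    (hA : 4 ≤ A.ncard)
    (h : ∀ A' ⊆ A, A'.ncard = 3 → TwoConnectedOn G (A' ∪ superNbhd G Y A')) :
    TwoConnectedOn G (A ∪ superNbhd G Y A) := by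
  refine ⟨by linarith [ncard_le_ncard (subset_union_left (s := A) (t := superNbhd G Y A))],
    fun v _ => ?_⟩
  obtain ⟨a₀, ha₀A, ha₀v⟩ := exists_ne_of_one_lt_ncard (by omega : 1 < A.ncard) v
  have ha₀ : a₀ ∈ (A ∪ superNbhd G Y A) \ {v} := ⟨Or.inl ha₀A, ha₀v⟩
  rw [connected_iff_exists_forall_reachable]
  refine ⟨⟨a₀, ha₀⟩, fun ⟨w, hw⟩ => ?_⟩
  obtain ⟨hwA | hwN, -⟩ := hw
  · exact reachable_induce_union_superNbhd_diff_singleton G Y hA h ha₀A hwA ha₀ _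
  · obtain ⟨a, haA, hav, hwa⟩ := exists_adj_ne_of_mem_superNbhd G Y hwN v
    exact (reachable_induce_union_superNbhd_diff_singleton G Y hA h ha₀A haA ha₀
      ⟨Or.inl haA, hav⟩).trans (Adj.reachable (G := G.induce _) hwa.symm)

end

theorem stmt_18_general {V : Type*} [Fintype V] (G : SimpleGraph V) (Y : Set V)
    (A : Set V) (hA4 : 4 ≤ A.ncard)
    (hnot : ¬ TwoConnectedOn G (A ∪ superNbhd G Y A)) :
    ∃ A' ⊆ A, A'.ncard = 3 ∧ ¬ TwoConnectedOn G (A' ∪ superNbhd G Y A') := by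
  by_contra! h
  exact hnot (twoConnectedOn_union_superNbhd_of_forall_triple G Y hA4 h)

theorem stmt_18 {V : Type*} [Fintype V] (G : SimpleGraph V) (X Y : Set V)
    (hbip : IsBipartition G X Y) (hX : 4 ≤ X.ncard)
    (hcard : ∀ A ⊆ X, 3 ≤ A.ncard → A.ncard ≤ (superNbhd G Y A).ncard)
    (A : Set V) (hA : A ⊆ X) (hA4 : 4 ≤ A.ncard)
    (hnot : ¬ TwoConnectedOn G (A ∪ superNbhd G Y A)) :
    ∃ A' ⊆ A, A'.ncard = 3 ∧ ¬ TwoConnectedOn G (A' ∪ superNbhd G Y A') :=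
  stmt_18_general G Y A hA4 hnot
end
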